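/- arXiv:2502.10393 — 2 statements merged into one kernel-verified Lean document; each statement's English description precedes it below -/
import Mathlib

section
/- Let W = {(a,b) ∈ ℝ² : a ≥ 0, |b| ≤ a} and S_W = {g ∈ SL(2,ℝ) : gW ⊆ W}. Then for every g ∈ S_W, the Euclidean norm of g·(1,0) satisfies ‖g(1,0)‖ ≥ 1/2. -/
open Matrix

/-- For every `g` in the compression semigroup of the cone
`W = {(a,b) : a ≥ 0, |b| ≤ a}` in `SL(2,ℝ)`, the Euclidean norm of
`g·(1,0)` is at least `1/2`. -/
theorem SW_norm_lower_bound (g : SpecialLinearGroup (Fin 2) ℝ)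
    (hg : ∀ v : Fin 2 → ℝ, 0 ≤ v 0 → |v 1| ≤ v 0 →
      0 ≤ (g : Matrix (Fin 2) (Fin 2) ℝ).mulVec v 0 ∧
        |(g : Matrix (Fin 2) (Fin 2) ℝ).mulVec v 1| ≤
          (g : Matrix (Fin 2) (Fin 2) ℝ).mulVec v 0) :
    (1 : ℝ) / 2 ≤ Real.sqrt
      (((g : Matrix (Fin 2) (Fin 2) ℝ).mulVec ![1, 0] 0) ^ 2 +
        ((g : Matrix (Fin 2) (Fin 2) ℝ).mulVec ![1, 0] 1) ^ 2) := by
  set M := (g : Matrix (Fin 2) (Fin 2) ℝ) with hM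
  set a := M 0 0
  set b := M 0 1
  set c := M 1 0
  set d := M 1 1
  have hdet : a * d - b * c = 1 := by
    have := g.2
    rw [Matrix.det_fin_two] at this
    linarith [this]
  have h1 := hg ![1, 1] (by norm_num) (by norm_num)
  have h2 := hg ![1, -1] (by norm_num) (by norm_num)
  simp only [Matrix.mulVec, dotProduct, Fin.sum_univ_two,
    Matrix.cons_val_zero, Matrix.cons_val_one, Matrix.head_cons] at h1 h2 ⊢
  obtain ⟨h1a, h1b⟩ := h1
  obtain ⟨h2a, h2b⟩ := h2
  rw [abs_le] at h1b h2b
  have key : (1 : ℝ) / 2 ≤ a := by nlinarith [h1b.1, h1b.2, h2b.1, h2b.2]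
  have : (1 : ℝ) / 4 ≤ a * 1 * 1 + (-1) * 0 * 1 + a * 1 * 1 * (a * 1 * 1) := by
    nlinarith
  calc (1 : ℝ) / 2 = Real.sqrt ((1/2)^2) := by
        rw [Real.sqrt_sq]; norm_num
    _ ≤ _ := by
        apply Real.sqrt_le_sqrt
        nlinarith [sq_nonneg (c * 1 + d * 0)]
end

section
/- Let g ∈ SL(2,ℝ) be written as g = L(y)·D(μ)·U(x), where L(y) is lower unitriangular with entry y, D(μ) = diag(μ, μ⁻¹) with μ > 0, and U(x) is upper unitriangular with entry x. Suppose |y| ≤ 1, g(1,-1) ∈ W and g(1,1) ∈ W, where W = {(a,b) : a ≥ 0, |b| ≤ a}. Then |x| ≤ 1 and μ ≥ 1/2. -/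
open Matrix

/-- If `g = L(y) D(μ) U(x)` with `μ > 0`, `|y| ≤ 1`, and `g` maps both
`(1,-1)` and `(1,1)` into the cone `W = {(a,b) : a ≥ 0, |b| ≤ a}`,
then `|x| ≤ 1` and `μ ≥ 1/2`. -/
theorem LDU_estimate (x y μ : ℝ) (hμ : 0 < μ) (hy : |y| ≤ 1)
    (g : Matrix (Fin 2) (Fin 2) ℝ)
    (hg : g = !![1, 0; y, 1] * !![μ, 0; 0, μ⁻¹] * !![1, x; 0, 1])
    (h1 : 0 ≤ g.mulVec ![1, -1] 0 ∧ |g.mulVec ![1, -1] 1| ≤ g.mulVec ![1, -1] 0)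
    (h2 : 0 ≤ g.mulVec ![1, 1] 0 ∧ |g.mulVec ![1, 1] 1| ≤ g.mulVec ![1, 1] 0) :
    |x| ≤ 1 ∧ 1 / 2 ≤ μ := by
  subst hg
  simp [Matrix.mulVec, dotProduct, Fin.sum_univ_two, Matrix.mul_apply,
    Matrix.cons_val_zero, Matrix.cons_val_one] at h1 h2
  obtain ⟨h1a, h1b⟩ := h1
  obtain ⟨h2a, h2b⟩ := h2
  have h1b' := abs_le.mp (show |y * μ + (-μ⁻¹ + -(y * μ * x))| ≤ μ - μ * x by linarith)
  have h2b' := abs_le.mp h2b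
  rw [abs_le] at hy
  have hinv : 0 < μ⁻¹ := inv_pos.mpr hμ
  have hmm : μ * μ⁻¹ = 1 := mul_inv_cancel₀ hμ.ne'
  have hx : |x| ≤ 1 := by
    rw [abs_le]
    constructor <;> nlinarith [h1a, h2a, hμ]
  refine ⟨hx, ?_⟩
  rw [abs_le] at hx
  nlinarith [h1b'.1, h2b'.2, hμ, hinv, hmm, hx.1, hx.2, hy.1, hy.2,
    mul_pos hμ hμ, sq_nonneg (x*y), sq_nonneg (μ - 1/2)]
end
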